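/- Fix a total order on the indeterminates {X_i} and order monomials of ℤ⟪X_I⟫ first by total degree and then lexicographically; define f ≺ g iff the coefficient of the smallest monomial on which f and g differ is larger in g. Then the Magnus order on the free group F, defined by a < b iff M(a) ≺ M(b), is a bi-order on F. -/

import Mathlib

/-! Noncommutative formal power series over `ℤ` in indeterminates indexed by `I`
are modelled as coefficient functions on words (`List I`). -/

/-- Convolution (Cauchy) product of noncommutative power series. -/
def conv {I : Type*} (f g : List I → ℤ) : List I → ℤ :=
  fun w => ∑ k ∈ Finset.range (w.length + 1), f (w.take k) * g (w.drop k)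

/-- The power series `1`. -/
def oneSeries {I : Type*} : List I → ℤ := fun w => match w with | [] => 1 | _ => 0

/-- The power series `1 + X_i`, the Magnus expansion of the generator `x_i`. -/
def genSeries {I : Type*} [DecidableEq I] (i : I) : List I → ℤ :=
  fun w => if w = [] ∨ w = [i] then 1 else 0

/-- The power series `1 - X_i + X_i² - ⋯`, the Magnus expansion of `x_i⁻¹`. -/
def invGenSeries {I : Type*} [DecidableEq I] (i : I) : List I → ℤ :=
  fun w => if w = List.replicate w.length i then (-1) ^ w.length else 0

/-- The expansion of a single letter of a reduced word. -/
def letterSeries {I : Type*} [DecidableEq I] (p : I × Bool) : List I → ℤ :=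
  if p.2 then genSeries p.1 else invGenSeries p.1

/-- The Magnus expansion of an element of the free group on `I`. -/
def magnus {I : Type*} [DecidableEq I] (a : FreeGroup I) : List I → ℤ :=
  ((FreeGroup.toWord a).map letterSeries).foldr conv oneSeries

/-- Order on monomials (words): first by total degree (length), then lexicographically. -/
def monLt {I : Type*} [LinearOrder I] (w v : List I) : Prop :=
  w.length < v.length ∨ (w.length = v.length ∧ List.Lex (· < ·) w v)

/-- `f ≺ g` iff the coefficient of the smallest monomial where `f` and `g` differ
is larger in `g` (i.e. the lowest nonzero coefficient of `g - f` is positive). -/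
def seriesLt {I : Type*} [LinearOrder I] (f g : List I → ℤ) : Prop :=
  ∃ w : List I, f w < g w ∧ ∀ v : List I, monLt v w → f v = g v

/-- The Magnus order on the free group. -/
def magnusLt {I : Type*} [LinearOrder I] [DecidableEq I] (a b : FreeGroup I) : Prop :=
  seriesLt (magnus a) (magnus b)


/-! The Magnus expansion is the homomorphism from `F` to the units of `ℤ⟪X_I⟫` sending `x_i` to
`1 + X_i`, so `≺` is invariant under multiplication on either side: multiplying two series by a
series with constant term `1` leaves their coefficients below the first monomial where they differ
equal, and adds the same difference at that monomial.

The order is total because the expansion is injective. Each `(1 + X_i)^e = 1 + e X_i + ⋯`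
involves only powers of `X_i`, so on monomials without adjacent repeated letters the expansion of a
reduced word `x_{i₁}^{e₁} ⋯ x_{iₖ}^{eₖ}` (`i_j ≠ i_{j+1}`, `e_j ≠ 0`) is supported on subwords of
`X_{i₁} ⋯ X_{iₖ}`, and its coefficient at `X_{i₁} ⋯ X_{iₖ}` itself is `e₁ ⋯ eₖ ≠ 0`. -/

lemma List.head?_destutter {α : Type*} (R : α → α → Prop) [DecidableRel R] (l : List α) :
    (l.destutter R).head? = l.head? := by
  cases l with
  | nil => rfl
  | cons a l =>
    induction l generalizing a with
    | nil => rfl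
    | cons b l ih =>
      rw [List.destutter_cons_cons]
      split_ifs
      · rfl
      · exact ih a

lemma List.destutter_ne_cons {α : Type*} [DecidableEq α] (a : α) (l : List α) :
    (a :: l).destutter (· ≠ ·) =
      if (l.destutter (· ≠ ·)).head? = some a then l.destutter (· ≠ ·)
      else a :: l.destutter (· ≠ ·) := by
  cases l with
  | nil => rfl
  | cons b l =>
    rw [List.destutter_cons_cons, List.head?_destutter, ← List.destutter_cons',
      ← List.destutter_cons']
    by_cases h : a = b
    · simp [h]
    · simp [h, Ne.symm h]

lemma List.finite_length_le_and_forall_mem {α : Type*} (S : Finset α) (n : ℕ) :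
    {w : List α | w.length ≤ n ∧ ∀ x ∈ w, x ∈ S}.Finite := by
  refine ((List.finite_length_le S n).image (List.map Subtype.val)).subset ?_
  rintro w ⟨hw, hS⟩
  exact ⟨w.attachWith (· ∈ S) hS, by simpa using hw, List.attachWith_map_subtype_val hS⟩

section Series
variable {I : Type*}

lemma oneSeries_cons (a : I) (w : List I) : oneSeries (a :: w) = 0 := rfl

lemma oneSeries_eq_zero {w : List I} (hw : w ≠ []) : oneSeries w = 0 := by
  obtain ⟨a, w, rfl⟩ := List.exists_cons_of_ne_nil hw
  rfl

lemma conv_apply_nil (f g : List I → ℤ) : conv f g [] = f [] * g [] := by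
  simp [conv]

lemma conv_apply_cons (f g : List I → ℤ) (a : I) (w : List I) :
    conv f g (a :: w) = f [] * g (a :: w) + conv (fun u => f (a :: u)) g w := by
  rw [conv, List.length_cons, Finset.sum_range_succ', add_comm]
  simp [conv]

lemma conv_eq_zero_of_left {f : List I → ℤ} (hf : ∀ u, f u = 0) (g : List I → ℤ) (w : List I) :
    conv f g w = 0 := by
  simp [conv, hf]

lemma conv_add_left (f₁ f₂ g : List I → ℤ) (w : List I) :
    conv (fun u => f₁ u + f₂ u) g w = conv f₁ g w + conv f₂ g w := by
  simp [conv, add_mul, Finset.sum_add_distrib]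

lemma conv_const_mul_left (c : ℤ) (f g : List I → ℤ) (w : List I) :
    conv (fun u => c * f u) g w = c * conv f g w := by
  simp [conv, mul_assoc, Finset.mul_sum]

lemma conv_neg_left (f g : List I → ℤ) (w : List I) :
    conv (fun u => -f u) g w = -conv f g w := by
  simp [conv, Finset.sum_neg_distrib]

lemma oneSeries_conv (f : List I → ℤ) : conv oneSeries f = f := by
  funext w
  cases w with
  | nil => simp [conv_apply_nil, oneSeries]
  | cons a w => simp [conv_apply_cons, oneSeries, conv_eq_zero_of_left]

lemma conv_oneSeries (f : List I → ℤ) : conv f oneSeries = f := by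
  funext w
  rw [conv, Finset.sum_eq_single_of_mem w.length (by simp)]
  · simp [oneSeries]
  · intro k hk hkw
    rw [Finset.mem_range] at hk
    rw [oneSeries_eq_zero (by rw [Ne, List.drop_eq_nil_iff]; omega), mul_zero]

lemma conv_assoc (f g h : List I → ℤ) : conv (conv f g) h = conv f (conv g h) := by
  funext w
  induction w generalizing f with
  | nil => simp [conv_apply_nil, mul_assoc]
  | cons a w ih =>
    simp only [conv_apply_cons, conv_apply_nil, conv_add_left, conv_const_mul_left, ih]
    ring

lemma exists_of_conv_apply_ne_zero {f g : List I → ℤ} {w : List I}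
    (h : conv f g w ≠ 0) : ∃ k, f (w.take k) ≠ 0 ∧ g (w.drop k) ≠ 0 := by
  obtain ⟨k, -, hk⟩ := Finset.exists_ne_zero_of_sum_ne_zero h
  exact ⟨k, left_ne_zero_of_mul hk, right_ne_zero_of_mul hk⟩

lemma conv_apply_sub_conv_apply_right {f g : List I → ℤ} (h : List I → ℤ) {w : List I}
    (hfg : ∀ v, v.length < w.length → f v = g v) :
    conv f h w - conv g h w = (f w - g w) * h [] := by
  rw [conv, conv, ← Finset.sum_sub_distrib, Finset.sum_eq_single_of_mem w.length (by simp),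
    List.take_length, List.drop_length, sub_mul]
  intro k hk hkw
  rw [Finset.mem_range] at hk
  rw [hfg _ (by rw [List.length_take]; omega), sub_self]

lemma conv_apply_sub_conv_apply_left {f g : List I → ℤ} (h : List I → ℤ) {w : List I}
    (hfg : ∀ v, v.length < w.length → f v = g v) :
    conv h f w - conv h g w = h [] * (f w - g w) := by
  rw [conv, conv, ← Finset.sum_sub_distrib, Finset.sum_eq_single_of_mem 0 (by simp),
    List.take_zero, List.drop_zero, mul_sub]
  intro k hk hk0
  rw [Finset.mem_range] at hk
  rw [hfg _ (by rw [List.length_drop]; omega), sub_self]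

lemma conv_apply_of_isChain [DecidableEq I] {f : List I → ℤ} {i : I}
    (hf : ∀ w, f w ≠ 0 → ∀ x ∈ w, x = i) (g : List I → ℤ) {v : List I} (hv : v.IsChain (· ≠ ·)) :
    conv f g v = f [] * g v + if v.head? = some i then f [i] * g v.tail else 0 := by
  rcases v with _ | ⟨a, t⟩
  · simp [conv_apply_nil]
  simp only [conv_apply_cons, List.head?_cons, List.tail_cons, Option.some.injEq]
  by_cases ha : a = i
  · subst ha
    rw [if_pos rfl]
    congr 1
    rcases t with _ | ⟨c, r⟩
    · rw [conv_apply_nil]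
    · rw [conv_apply_cons, conv_eq_zero_of_left, add_zero]
      intro u
      by_contra hu
      exact (List.isChain_cons_cons.mp hv).1 (hf _ hu c (by simp)).symm
  · rw [if_neg ha, conv_eq_zero_of_left, add_zero]
    intro u
    by_contra hu
    exact ha (hf _ hu a (by simp))

end Series

/-- A type synonym: `List I → ℤ` already carries the pointwise product. -/
def NCSeries (I : Type*) := List I → ℤ

instance {I : Type*} : Monoid (NCSeries I) where
  mul := conv
  one := oneSeries
  mul_assoc := conv_assoc
  one_mul := oneSeries_conv
  mul_one := conv_oneSeries

section Magnus
variable {I : Type*} [DecidableEq I]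

lemma genSeries_nil (i : I) : genSeries i [] = 1 := rfl

lemma invGenSeries_nil (i : I) : invGenSeries i [] = 1 := rfl

lemma genSeries_cons (i a : I) (w : List I) :
    genSeries i (a :: w) = if a = i then oneSeries w else 0 := by
  cases w <;> by_cases h : a = i <;> simp [genSeries, oneSeries, h]

lemma invGenSeries_cons (i a : I) (w : List I) :
    invGenSeries i (a :: w) = if a = i then -invGenSeries i w else 0 := by
  by_cases h : a = i
  · subst h
    simp only [invGenSeries, List.length_cons, List.replicate_succ, List.cons.injEq, true_and,
      if_true]
    split_ifs <;> simp [pow_succ]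
  · simp [invGenSeries, List.replicate_succ, h]

lemma genSeries_conv_invGenSeries (i : I) :
    conv (genSeries i) (invGenSeries i) = oneSeries := by
  funext w
  cases w with
  | nil => simp [conv_apply_nil, genSeries, invGenSeries, oneSeries]
  | cons a w =>
    rw [conv_apply_cons]
    simp only [genSeries_cons, invGenSeries_cons]
    by_cases h : a = i <;>
      simp [h, genSeries_nil, oneSeries_cons, oneSeries_conv, conv_eq_zero_of_left]

lemma invGenSeries_conv_genSeries (i : I) :
    conv (invGenSeries i) (genSeries i) = oneSeries := by
  funext w
  induction w with
  | nil => simp [conv_apply_nil, genSeries, invGenSeries, oneSeries]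
  | cons a w ih =>
    rw [conv_apply_cons]
    simp only [genSeries_cons, invGenSeries_cons]
    by_cases h : a = i <;>
      simp [h, invGenSeries_nil, oneSeries_cons, conv_neg_left, ih, conv_eq_zero_of_left]

def magnusUnit (i : I) : (NCSeries I)ˣ where
  val := genSeries i
  inv := invGenSeries i
  val_inv := genSeries_conv_invGenSeries i
  inv_val := invGenSeries_conv_genSeries i

lemma magnus_eq_lift (a : FreeGroup I) :
    magnus a = ((FreeGroup.lift magnusUnit a : (NCSeries I)ˣ) : NCSeries I) := by
  conv_rhs => rw [← FreeGroup.mk_toWord (x := a)]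
  rw [FreeGroup.lift_mk, ← Units.coeHom_apply, map_list_prod, List.map_map, List.prod_eq_foldr]
  have hletter : (Units.coeHom (NCSeries I) ∘ fun p : I × Bool =>
      bif p.2 then magnusUnit p.1 else (magnusUnit p.1)⁻¹) = letterSeries := by
    funext ⟨i, b⟩
    cases b <;> rfl
  rw [hletter]
  rfl

lemma magnus_mul (a b : FreeGroup I) : magnus (a * b) = conv (magnus a) (magnus b) := by
  simp only [magnus_eq_lift, map_mul, Units.val_mul]
  rfl

lemma letterSeries_nil (p : I × Bool) : letterSeries p [] = 1 := by
  obtain ⟨i, _ | _⟩ := p <;> rfl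

lemma letterSeries_singleton (i : I) (b : Bool) :
    letterSeries (i, b) [i] = if b then 1 else -1 := by
  cases b <;> simp [letterSeries, genSeries, invGenSeries]

lemma eq_of_mem_of_letterSeries_ne_zero {p : I × Bool} {w : List I} (h : letterSeries p w ≠ 0)
    {x : I} (hx : x ∈ w) : x = p.1 := by
  obtain ⟨i, b | b⟩ := p
  · have hw : w = List.replicate w.length i := by
      by_contra hw
      exact h (if_neg hw)
    exact List.eq_of_mem_replicate (hw ▸ hx)
  · have hw : w = [] ∨ w = [i] := by
      by_contra hw
      exact h (if_neg hw)
    rcases hw with rfl | rfl <;> simp_all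

def wordSeries (L : List (I × Bool)) : List I → ℤ := (L.map letterSeries).foldr conv oneSeries

lemma magnus_eq_wordSeries (a : FreeGroup I) : magnus a = wordSeries a.toWord := rfl

lemma wordSeries_cons (p : I × Bool) (L : List (I × Bool)) :
    wordSeries (p :: L) = conv (letterSeries p) (wordSeries L) := rfl

lemma wordSeries_apply_nil (L : List (I × Bool)) : wordSeries L [] = 1 := by
  induction L with
  | nil => rfl
  | cons p L ih => rw [wordSeries_cons, conv_apply_nil, letterSeries_nil, ih, one_mul]

lemma wordSeries_cons_apply (i : I) (b : Bool) (L : List (I × Bool)) {v : List I}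
    (hv : v.IsChain (· ≠ ·)) :
    wordSeries ((i, b) :: L) v =
      wordSeries L v +
        if v.head? = some i then (if b then 1 else -1) * wordSeries L v.tail else 0 := by
  rw [wordSeries_cons,
    conv_apply_of_isChain (fun _ h _ hx => eq_of_mem_of_letterSeries_ne_zero h hx) _ hv,
    letterSeries_nil, letterSeries_singleton, one_mul]

lemma mem_of_wordSeries_ne_zero {L : List (I × Bool)} {w : List I}
    (h : wordSeries L w ≠ 0) {x : I} (hx : x ∈ w) : x ∈ L.map Prod.fst := by
  induction L generalizing w with
  | nil =>
    rcases w with _ | ⟨a, w⟩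
    · simp at hx
    · exact (h rfl).elim
  | cons p L ih =>
    rw [wordSeries_cons] at h
    obtain ⟨k, hp, hL⟩ := exists_of_conv_apply_ne_zero h
    rw [← List.take_append_drop k w, List.mem_append] at hx
    rcases hx with hx | hx
    · simp [eq_of_mem_of_letterSeries_ne_zero hp hx]
    · exact List.mem_cons_of_mem _ (ih hL hx)

lemma magnus_apply_nil (a : FreeGroup I) : magnus a [] = 1 := by
  rw [magnus_eq_wordSeries, wordSeries_apply_nil]

/-- For a reduced word `x_{i₁}^{e₁} ⋯ x_{iₖ}^{eₖ}` this is `[i₁, …, iₖ]`. -/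
def syllableGens (L : List (I × Bool)) : List I := (L.map Prod.fst).destutter (· ≠ ·)

lemma syllableGens_cons (i : I) (b : Bool) (L : List (I × Bool)) :
    syllableGens ((i, b) :: L) =
      if (syllableGens L).head? = some i then syllableGens L else i :: syllableGens L :=
  List.destutter_ne_cons i _

lemma isChain_syllableGens (L : List (I × Bool)) : (syllableGens L).IsChain (· ≠ ·) :=
  List.isChain_destutter _ _

lemma head?_syllableGens (L : List (I × Bool)) :
    (syllableGens L).head? = (L.head?).map Prod.fst := by
  rw [syllableGens, List.head?_destutter, List.head?_map]

lemma sublist_syllableGens_of_wordSeries_ne_zero {L : List (I × Bool)} {v : List I}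
    (hv : v.IsChain (· ≠ ·)) (h : wordSeries L v ≠ 0) : v.Sublist (syllableGens L) := by
  induction L generalizing v with
  | nil =>
    rcases v with _ | ⟨a, t⟩
    · exact List.nil_sublist _
    · exact (h rfl).elim
  | cons p L ih =>
    obtain ⟨i, b⟩ := p
    rw [wordSeries_cons_apply i b L hv] at h
    have hcases : wordSeries L v ≠ 0 ∨ (v.head? = some i ∧ wordSeries L v.tail ≠ 0) := by
      by_contra! hc
      apply h
      by_cases hi : v.head? = some i
      · simp [hi, hc.1, hc.2 hi]
      · simp [hi, hc.1]
    rw [syllableGens_cons]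
    rcases hcases with hv' | ⟨hi, htail⟩
    · split_ifs
      exacts [ih hv hv', (ih hv hv').cons i]
    obtain ⟨r, rfl⟩ := List.head?_eq_some_iff.mp hi
    have hr := ih hv.tail htail
    split_ifs with hs
    · obtain ⟨s, hs⟩ := List.head?_eq_some_iff.mp hs
      rw [hs] at hr ⊢
      rcases List.sublist_cons_iff.mp hr with hr | ⟨r', rfl, -⟩
      · exact hr.cons_cons i
      · exact absurd rfl (List.isChain_cons_cons.mp hv).1
    · exact hr.cons_cons i

/-- If the first syllable is `x_i^e`, the coefficient at the syllable word is `e` times the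
coefficient at its tail, and `e` has the sign of the first letter. -/
lemma wordSeries_syllableGens_mul_pos {i : I} {b : Bool} {L : List (I × Bool)}
    (hL : FreeGroup.IsReduced ((i, b) :: L)) :
    0 < (if b then 1 else -1) * wordSeries ((i, b) :: L) (syllableGens ((i, b) :: L)) *
      wordSeries ((i, b) :: L) (syllableGens ((i, b) :: L)).tail := by
  induction L generalizing i b with
  | nil =>
    have hgens : syllableGens [(i, b)] = [i] := rfl
    rw [hgens, List.tail_cons, wordSeries_cons_apply i b [] (List.isChain_singleton i),
      wordSeries_cons_apply i b [] List.isChain_nil]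
    cases b <;> simp [wordSeries, oneSeries]
  | cons q L ih =>
    obtain ⟨j, c⟩ := q
    obtain ⟨hij, hred⟩ := FreeGroup.isReduced_cons_cons.mp hL
    have hhead : (syllableGens ((j, c) :: L)).head? = some j := by
      rw [head?_syllableGens]; rfl
    obtain ⟨s, hs⟩ := List.head?_eq_some_iff.mp hhead
    have IH := ih hred
    rw [hs, List.tail_cons] at IH
    have hchain := isChain_syllableGens ((i, b) :: (j, c) :: L)
    rw [wordSeries_cons_apply i b _ hchain, wordSeries_cons_apply i b _ hchain.tail]
    rw [syllableGens_cons, hhead] at hchain ⊢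
    by_cases hji : j = i
    · subst hji
      obtain rfl : c = b := (hij rfl).symm
      rw [if_pos rfl, hs] at hchain ⊢
      have hs_head : s.head? ≠ some j := by
        rcases s with _ | ⟨k, s⟩
        · simp
        · simpa [eq_comm] using (List.isChain_cons_cons.mp hchain).1
      simp only [List.head?_cons, if_true, List.tail_cons, hs_head, if_false, add_zero]
      have hsq := sq_nonneg (wordSeries ((j, c) :: L) s)
      cases c <;> simp at IH ⊢ <;> nlinarith
    · rw [if_neg (show some j ≠ some i by simpa using hji), hs] at hchain ⊢
      have hzero : wordSeries ((j, c) :: L) (i :: j :: s) = 0 := by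
        by_contra hne
        have := (sublist_syllableGens_of_wordSeries_ne_zero hchain hne).length_le
        simp [hs] at this
      have hW : wordSeries ((j, c) :: L) (j :: s) ≠ 0 := fun h0 => by simp [h0] at IH
      simp only [List.head?_cons, Option.some.injEq, hji, if_false, if_true, List.tail_cons,
        hzero, zero_add, add_zero]
      cases b <;> simp [hW]

lemma wordSeries_syllableGens_ne_zero {L : List (I × Bool)} (hL : FreeGroup.IsReduced L) :
    wordSeries L (syllableGens L) ≠ 0 := by
  rcases L with _ | ⟨⟨i, b⟩, L⟩
  · exact one_ne_zero
  · exact right_ne_zero_of_mul (left_ne_zero_of_mul (wordSeries_syllableGens_mul_pos hL).ne')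

lemma magnus_ne_one {a : FreeGroup I} (ha : a ≠ 1) : magnus a ≠ oneSeries := by
  intro h
  apply wordSeries_syllableGens_ne_zero (FreeGroup.isReduced_toWord (x := a))
  rw [← magnus_eq_wordSeries, h, oneSeries_eq_zero]
  rwa [syllableGens, Ne, List.destutter_eq_nil, List.map_eq_nil_iff, FreeGroup.toWord_eq_nil_iff]

lemma magnus_injective : Function.Injective (magnus : FreeGroup I → List I → ℤ) := by
  have hlift : Function.Injective (FreeGroup.lift (magnusUnit (I := I))) := by
    refine (injective_iff_map_eq_one _).mpr fun a ha => ?_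
    by_contra hne
    exact magnus_ne_one hne (by rw [magnus_eq_lift, ha]; rfl)
  intro a b hab
  exact hlift (Units.ext (by rwa [magnus_eq_lift, magnus_eq_lift] at hab))

end Magnus

section Order
variable {I : Type*} [LinearOrder I]

lemma monLt_iff_toLex_lt {v w : List I} :
    monLt v w ↔ toLex (v.length, v) < toLex (w.length, w) := by
  rw [Prod.Lex.toLex_lt_toLex]
  rfl

lemma monLt_trans {u v w : List I} (huv : monLt u v) (hvw : monLt v w) : monLt u w := by
  rw [monLt_iff_toLex_lt] at *
  exact huv.trans hvw

lemma seriesLt_irrefl (f : List I → ℤ) : ¬ seriesLt f f :=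
  fun ⟨_, hw, _⟩ => lt_irrefl _ hw

lemma seriesLt_trans {f g h : List I → ℤ} (hfg : seriesLt f g) (hgh : seriesLt g h) :
    seriesLt f h := by
  obtain ⟨u, hu, hbelow_u⟩ := hfg
  obtain ⟨v, hv, hbelow_v⟩ := hgh
  rcases lt_trichotomy (toLex (u.length, u)) (toLex (v.length, v)) with huv | huv | huv
  · rw [← monLt_iff_toLex_lt] at huv
    exact ⟨u, hbelow_v u huv ▸ hu,
      fun w hw => (hbelow_u w hw).trans (hbelow_v w (monLt_trans hw huv))⟩
  · obtain rfl : u = v := congrArg Prod.snd (toLex.injective huv)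
    exact ⟨u, hu.trans hv, fun w hw => (hbelow_u w hw).trans (hbelow_v w hw)⟩
  · rw [← monLt_iff_toLex_lt] at huv
    exact ⟨v, (hbelow_u v huv).symm ▸ hv,
      fun w hw => (hbelow_u w (monLt_trans hw huv)).trans (hbelow_v w hw)⟩

/-- Degree-lex does not well-order words over an infinite alphabet; a least differing monomial
exists because only finitely many words over `S` have bounded length. -/
lemma seriesLt_or_seriesLt_of_ne {f g : List I → ℤ} (hfg : f ≠ g) (S : Finset I)
    (hS : ∀ w, f w ≠ g w → ∀ x ∈ w, x ∈ S) : seriesLt f g ∨ seriesLt g f := by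
  obtain ⟨w₀, hw₀⟩ := Function.ne_iff.mp hfg
  set D := {w : List I | w.length ≤ w₀.length ∧ f w ≠ g w}
  have hD : D.Finite := (List.finite_length_le_and_forall_mem S w₀.length).subset
    fun w hw => ⟨hw.1, hS w hw.2⟩
  obtain ⟨w, ⟨hw_len, hw⟩, hmin⟩ :=
    D.exists_min_image (fun w => toLex (w.length, w)) hD ⟨w₀, le_rfl, hw₀⟩
  have hbelow : ∀ v, monLt v w → f v = g v := by
    intro v hv
    by_contra hne
    have hvw := monLt_iff_toLex_lt.mp hv
    have hv_len : v.length ≤ w.length := by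
      rcases hv with h | h
      exacts [h.le, h.1.le]
    exact (hmin v ⟨hv_len.trans hw_len, hne⟩).not_gt hvw
  rcases hw.lt_or_gt with hlt | hgt
  · exact Or.inl ⟨w, hlt, hbelow⟩
  · exact Or.inr ⟨w, hgt, fun v hv => (hbelow v hv).symm⟩

lemma seriesLt_conv_right {f g : List I → ℤ} (hfg : seriesLt f g) {h : List I → ℤ}
    (hh : h [] = 1) : seriesLt (conv f h) (conv g h) := by
  obtain ⟨w, hw, hbelow⟩ := hfg
  refine ⟨w, ?_, fun v hv => ?_⟩
  · have hdiff := conv_apply_sub_conv_apply_right h fun v hv => hbelow v (Or.inl hv)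
    rw [hh, mul_one] at hdiff
    linarith
  · have hdiff := conv_apply_sub_conv_apply_right h (w := v)
      fun u hu => hbelow u (monLt_trans (Or.inl hu) hv)
    rw [hbelow v hv, sub_self, zero_mul] at hdiff
    linarith

lemma seriesLt_conv_left {f g : List I → ℤ} (hfg : seriesLt f g) {h : List I → ℤ}
    (hh : h [] = 1) : seriesLt (conv h f) (conv h g) := by
  obtain ⟨w, hw, hbelow⟩ := hfg
  refine ⟨w, ?_, fun v hv => ?_⟩
  · have hdiff := conv_apply_sub_conv_apply_left h fun v hv => hbelow v (Or.inl hv)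
    rw [hh, one_mul] at hdiff
    linarith
  · have hdiff := conv_apply_sub_conv_apply_left h (w := v)
      fun u hu => hbelow u (monLt_trans (Or.inl hu) hv)
    rw [hbelow v hv, sub_self, mul_zero] at hdiff
    linarith

lemma magnusLt_or_magnusLt_of_ne [DecidableEq I] {a b : FreeGroup I} (hab : a ≠ b) :
    magnusLt a b ∨ magnusLt b a := by
  refine seriesLt_or_seriesLt_of_ne (magnus_injective.ne hab)
    ((a.toWord ++ b.toWord).map Prod.fst).toFinset fun w hw x hx => ?_
  have hne : magnus a w ≠ 0 ∨ magnus b w ≠ 0 := by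
    by_contra! h
    exact hw (h.1.trans h.2.symm)
  simp only [magnus_eq_wordSeries] at hne
  rw [List.map_append, List.toFinset_append, Finset.mem_union, List.mem_toFinset,
    List.mem_toFinset]
  exact hne.imp (mem_of_wordSeries_ne_zero · hx) (mem_of_wordSeries_ne_zero · hx)

end Order

theorem magnusOrder_is_biOrder {I : Type*} [LinearOrder I] [DecidableEq I] :
    IsStrictTotalOrder (FreeGroup I) magnusLt ∧
    ∀ a b c : FreeGroup I, magnusLt a b →
      magnusLt (a * c) (b * c) ∧ magnusLt (c * a) (c * b) := by
  refine ⟨{ irrefl := fun _ => seriesLt_irrefl _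
            trans := fun _ _ _ => seriesLt_trans
            trichotomous := fun a b hab hba => ?_ }, fun a b c h => ?_⟩
  · by_contra hne
    exact (magnusLt_or_magnusLt_of_ne hne).elim hab hba
  · simp only [magnusLt, magnus_mul]
    exact ⟨seriesLt_conv_right h (magnus_apply_nil c), seriesLt_conv_left h (magnus_apply_nil c)⟩
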